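/- arXiv:1207.5470 — 5 statements merged into one kernel-verified Lean document; each statement's English description precedes it below -/
import Mathlib

section
/- Let f : (0,R] → ℝ be C¹ with: (1) f ∈ L²(0,R); (2) x f(x)² → 0 as x → 0⁺; (3) x f'(x) → 0 as x → 0⁺; (4) (1/r)∫₀^r x (f(r) - f(x)) f'(x) dx → 0 as r → 0⁺. Define the even function u on [-R,R] by u(x) = f(|x|). Then ψ(r) := (1/(2r))∫_{-r}^{r} |u(x) - u_{(-r,r)}|² dx → 0 as r → 0⁺, where u_{(-r,r)} is the average of u over (-r,r). -/
/-!
The mean square oscillation of `u = f ∘ |·|` over `(-r, r]` is the variance of `f` over `(0, r]`,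
which is at most the mean of `(f - f r)²` there. Integrating the derivative of
`x (f x - f r)²` over `(0, r]` rewrites `∫₀^r (f - f r)²` as `2 ∫₀^r x (f r - f x) f' x`: the
boundary term vanishes at `r` trivially and at `0` because `x f x² → 0`, while `x f' x → 0`
keeps `x f' x` bounded, so the new integrand is integrable.
-/

open MeasureTheory Filter Set Topology

theorem integral_Ioc_neg_comp_abs (g : ℝ → ℝ) (r : ℝ) :
    ∫ x in Ioc (-r) r, g |x| = 2 * ∫ x in Ioc 0 r, g x := by
  have h := integral_comp_abs (f := (Iic r).indicator g)
  have habs : (fun x : ℝ => (Iic r).indicator g |x|) =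
      (Icc (-r) r).indicator (fun x => g |x|) := by
    ext x
    simp only [indicator, mem_Iic, mem_Icc, ← abs_le]
  rw [habs, integral_indicator measurableSet_Icc, setIntegral_indicator measurableSet_Iic,
    Ioi_inter_Iic] at h
  rwa [← integral_Icc_eq_integral_Ioc]

theorem setAverage_Ioc_neg_comp_abs (g : ℝ → ℝ) {r : ℝ} (hr : 0 < r) :
    ⨍ x in Ioc (-r) r, g |x| = ⨍ x in Ioc 0 r, g x := by
  rw [setAverage_eq, setAverage_eq, integral_Ioc_neg_comp_abs,
    Real.volume_real_Ioc_of_le (by linarith), Real.volume_real_Ioc_of_le hr.le,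
    smul_eq_mul, smul_eq_mul]
  field_simp [hr.ne']
  ring

theorem integral_sub_average_sq_le {α : Type*} [MeasurableSpace α] {μ : Measure α}
    [IsFiniteMeasure μ] {g : α → ℝ} (hg : MemLp g 2 μ) (c : ℝ) :
    ∫ x, (g x - ⨍ y, g y ∂μ) ^ 2 ∂μ ≤ ∫ x, (g x - c) ^ 2 ∂μ := by
  set A := ⨍ y, g y ∂μ
  have hsplit : ∀ x, (g x - c) ^ 2 = (g x - A) ^ 2 + (2 * (A - c) * (g x - A) + (A - c) ^ 2) :=
    fun x => by ring
  have hsq : Integrable (fun x => (g x - A) ^ 2) μ := (hg.sub (memLp_const A)).integrable_sq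
  have hlin : Integrable (fun x => g x - A) μ :=
    (hg.integrable one_le_two).sub (integrable_const A)
  have hrest : Integrable (fun x => 2 * (A - c) * (g x - A) + (A - c) ^ 2) μ :=
    (hlin.const_mul _).add (integrable_const _)
  simp_rw [hsplit]
  rw [integral_add hsq hrest, integral_add (hlin.const_mul _) (integrable_const _),
    integral_const_mul, integral_sub_average, integral_const]
  have : 0 ≤ μ.real univ • (A - c) ^ 2 := by positivity
  linarith

theorem exists_norm_le_of_continuousOn_Ioc {E : Type*} [NormedAddCommGroup E] {g : ℝ → E}
    {a b : ℝ} {l : E} (hg : ContinuousOn g (Ioc a b)) (hl : Tendsto g (𝓝[>] a) (𝓝 l)) :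
    ∃ C, ∀ x ∈ Ioc a b, ‖g x‖ ≤ C := by
  classical
  have hext : ContinuousOn (Function.update g a l) (Icc a b) := by
    refine continuousOn_update_iff.2 ⟨by rwa [Icc_sdiff_left], fun _ => ?_⟩
    rw [Icc_sdiff_left]
    exact hl.mono_left (nhdsWithin_mono _ Ioc_subset_Ioi_self)
  obtain ⟨C, hC⟩ := isCompact_Icc.exists_bound_of_continuousOn hext
  refine ⟨C, fun x hx => ?_⟩
  simpa [Function.update_of_ne hx.1.ne'] using hC x (Ioc_subset_Icc_self hx)

theorem tendsto_mul_sub_const_sq {f : ℝ → ℝ}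
    (h : Tendsto (fun x => x * f x ^ 2) (𝓝[>] 0) (𝓝 0)) (c : ℝ) :
    Tendsto (fun x => x * (f x - c) ^ 2) (𝓝[>] 0) (𝓝 0) := by
  have hbound : Tendsto (fun x => 2 * (x * f x ^ 2) + 2 * c ^ 2 * x) (𝓝[>] 0) (𝓝 0) := by
    simpa using (h.const_mul 2).add
      ((tendsto_id.mono_left nhdsWithin_le_nhds).const_mul (2 * c ^ 2))
  refine tendsto_of_tendsto_of_tendsto_of_le_of_le' tendsto_const_nhds hbound ?_ ?_
  · filter_upwards [self_mem_nhdsWithin] with x (hx : 0 < x)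
    positivity
  · filter_upwards [self_mem_nhdsWithin] with x (hx : 0 < x)
    nlinarith [sq_nonneg (f x + c)]

section

variable {f f' : ℝ → ℝ} {r : ℝ}

theorem integral_Ioc_sub_sq_eq_two_mul (hr : 0 < r)
    (hderiv : ∀ x ∈ Ioc 0 r, HasDerivAt f (f' x) x)
    (hsq : IntegrableOn (fun x => (f x - f r) ^ 2) (Ioc 0 r))
    (hD : IntegrableOn (fun x => x * (f r - f x) * f' x) (Ioc 0 r))
    (h0 : Tendsto (fun x => x * (f x - f r) ^ 2) (𝓝[>] 0) (𝓝 0)) :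
    ∫ x in Ioc 0 r, (f x - f r) ^ 2 = 2 * ∫ x in Ioc 0 r, x * (f r - f x) * f' x := by
  have hF : ∀ x ∈ Ioo 0 r, HasDerivAt (fun y => y * (f y - f r) ^ 2)
      ((f x - f r) ^ 2 - 2 * (x * (f r - f x) * f' x)) x := by
    intro x hx
    refine ((hasDerivAt_id' x).fun_mul
      (((hderiv x (Ioo_subset_Ioc_self hx)).sub_const (f r)).fun_pow 2)).congr_deriv ?_
    simp only [Nat.add_one_sub_one, pow_one, Nat.cast_ofNat, one_mul]
    ring
  have hcont : ContinuousAt (fun y => y * (f y - f r) ^ 2) r :=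
    continuousAt_id.mul (((hderiv r ⟨hr, le_rfl⟩).continuousAt.sub continuousAt_const).pow 2)
  have hr' : Tendsto (fun y => y * (f y - f r) ^ 2) (𝓝[<] r) (𝓝 0) := by
    simpa using hcont.tendsto.mono_left nhdsWithin_le_nhds
  have hint : IntervalIntegrable (fun x => (f x - f r) ^ 2 - 2 * (x * (f r - f x) * f' x))
      volume 0 r :=
    (intervalIntegrable_iff_integrableOn_Ioc_of_le hr.le).2 (hsq.sub (hD.const_mul 2))
  have hftc := intervalIntegral.integral_eq_sub_of_hasDerivAt_of_tendsto hr hF hint h0 hr'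
  rw [intervalIntegral.integral_of_le hr.le, integral_sub hsq (hD.const_mul 2),
    integral_const_mul] at hftc
  linarith

theorem integrableOn_mul_sub_mul_deriv (hf : IntegrableOn f (Ioc 0 r))
    (hderivc : ContinuousOn f' (Ioc 0 r))
    (h3 : Tendsto (fun x => x * f' x) (𝓝[>] 0) (𝓝 0)) :
    IntegrableOn (fun x => x * (f r - f x) * f' x) (Ioc 0 r) := by
  have hcont : ContinuousOn (fun x => x * f' x) (Ioc 0 r) := continuousOn_id.mul hderivc
  obtain ⟨C, hC⟩ := exists_norm_le_of_continuousOn_Ioc hcont h3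
  have hprod : IntegrableOn (fun x => x * f' x * (f r - f x)) (Ioc 0 r) :=
    ((integrable_const (f r)).sub hf).bdd_mul (hcont.aestronglyMeasurable measurableSet_Ioc)
      ((ae_restrict_iff' measurableSet_Ioc).2 (Eventually.of_forall hC))
  exact hprod.congr_fun (fun x _ => by ring) measurableSet_Ioc

theorem setIntegral_comp_abs_sub_setAverage_sq_le (hr : 0 < r)
    (hderiv : ∀ x ∈ Ioc 0 r, HasDerivAt f (f' x) x) (hderivc : ContinuousOn f' (Ioc 0 r))
    (hL2 : IntegrableOn (fun x => f x ^ 2) (Ioc 0 r))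
    (h2 : Tendsto (fun x => x * f x ^ 2) (𝓝[>] 0) (𝓝 0))
    (h3 : Tendsto (fun x => x * f' x) (𝓝[>] 0) (𝓝 0)) :
    ∫ x in Ioc (-r) r, (f |x| - ⨍ y in Ioc (-r) r, f |y|) ^ 2
      ≤ 4 * ∫ x in Ioc 0 r, x * (f r - f x) * f' x := by
  have hfc : ContinuousOn f (Ioc 0 r) := fun x hx =>
    (hderiv x hx).continuousAt.continuousWithinAt
  have hf : MemLp f 2 (volume.restrict (Ioc 0 r)) :=
    (memLp_two_iff_integrable_sq (hfc.aestronglyMeasurable measurableSet_Ioc)).2 hL2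
  have : IsFiniteMeasure (volume.restrict (Ioc (0 : ℝ) r)) := by
    rw [isFiniteMeasure_restrict]; exact measure_Ioc_lt_top.ne
  calc ∫ x in Ioc (-r) r, (f |x| - ⨍ y in Ioc (-r) r, f |y|) ^ 2
      = 2 * ∫ x in Ioc 0 r, (f x - ⨍ y in Ioc 0 r, f y) ^ 2 := by
        rw [setAverage_Ioc_neg_comp_abs f hr, integral_Ioc_neg_comp_abs (fun y => (f y - _) ^ 2)]
    _ ≤ 2 * ∫ x in Ioc 0 r, (f x - f r) ^ 2 :=
        mul_le_mul_of_nonneg_left (integral_sub_average_sq_le hf (f r)) zero_le_two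
    _ = 4 * ∫ x in Ioc 0 r, x * (f r - f x) * f' x := by
        rw [integral_Ioc_sub_sq_eq_two_mul hr hderiv (hf.sub (memLp_const _)).integrable_sq
          (integrableOn_mul_sub_mul_deriv (hf.integrable one_le_two) hderivc h3)
          (tendsto_mul_sub_const_sq h2 (f r))]
        ring

end

/-- Bramanti's key lemma: vanishing mean square oscillation of the even extension
`u(x) = f(|x|)` at the origin, for a `C¹` function `f` with mild decay hypotheses. -/
theorem bramanti_lemma (R : ℝ) (hR : 0 < R) (f f' : ℝ → ℝ)
    (hderiv : ∀ x ∈ Set.Ioc (0:ℝ) R, HasDerivAt f (f' x) x)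
    (hderivc : ContinuousOn f' (Set.Ioc (0:ℝ) R))
    (hL2 : IntegrableOn (fun x => f x ^ 2) (Set.Ioc (0:ℝ) R))
    (h2 : Tendsto (fun x => x * f x ^ 2) (nhdsWithin 0 (Set.Ioi 0)) (nhds 0))
    (h3 : Tendsto (fun x => x * f' x) (nhdsWithin 0 (Set.Ioi 0)) (nhds 0))
    (h4 : Tendsto (fun r => (1 / r) * ∫ x in Set.Ioc (0:ℝ) r, x * (f r - f x) * f' x)
      (nhdsWithin 0 (Set.Ioi 0)) (nhds 0)) :
    Tendsto
      (fun r => (1 / (2 * r)) *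
        ∫ x in Set.Ioc (-r) r, (f |x| - ⨍ y in Set.Ioc (-r) r, f |y|) ^ 2)
      (nhdsWithin 0 (Set.Ioi 0)) (nhds 0) := by
  refine tendsto_of_tendsto_of_tendsto_of_le_of_le' tendsto_const_nhds
    (mul_zero (2 : ℝ) ▸ h4.const_mul 2) ?_ ?_
  · filter_upwards [self_mem_nhdsWithin] with r (hr : 0 < r)
    exact mul_nonneg (by positivity) (integral_nonneg fun x => sq_nonneg _)
  · filter_upwards [Ioc_mem_nhdsGT hR] with r ⟨hr, hrR⟩
    have hsub : Ioc 0 r ⊆ Ioc 0 R := Ioc_subset_Ioc_right hrR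
    have hbound := setIntegral_comp_abs_sub_setAverage_sq_le hr
      (fun x hx => hderiv x (hsub hx)) (hderivc.mono hsub) (hL2.mono_set hsub) h2 h3
    calc (1 / (2 * r)) * ∫ x in Ioc (-r) r, (f |x| - ⨍ y in Ioc (-r) r, f |y|) ^ 2
        ≤ (1 / (2 * r)) * (4 * ∫ x in Ioc 0 r, x * (f r - f x) * f' x) :=
          mul_le_mul_of_nonneg_left hbound (by positivity)
      _ = 2 * ((1 / r) * ∫ x in Ioc 0 r, x * (f r - f x) * f' x) := by
          field_simp [hr.ne']
          ring
end

section
/- Let f : (0,1] → ℝ be C¹ and bounded, with x f'(x) → 0 as x → 0⁺, and suppose |f'| is bounded away from the origin (i.e., bounded on [ε,1] for each ε > 0). Define ω_ε(h) := max{|f(x) - f(y)| : |x-y| ≤ h, x,y ∈ [ε,1]}. Then ω_ε(2ε) → 0 as ε → 0⁺. -/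
open Filter

/-- Vanishing of the modulus of continuity `ω_ε(2ε)` away from the origin for a bounded
`C¹` function `f` on `(0,1]` with `x f'(x) → 0`. -/
theorem modulus_vanishes (f f' : ℝ → ℝ)
    (hderiv : ∀ x ∈ Set.Ioc (0:ℝ) 1, HasDerivAt f (f' x) x)
    (hderivc : ContinuousOn f' (Set.Ioc (0:ℝ) 1))
    (hbdd : ∃ M : ℝ, ∀ x ∈ Set.Ioc (0:ℝ) 1, |f x| ≤ M)
    (h3 : Tendsto (fun x => x * f' x) (nhdsWithin 0 (Set.Ioi 0)) (nhds 0))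
    (hderivbdd : ∀ ε : ℝ, 0 < ε → ∃ M : ℝ, ∀ x ∈ Set.Icc ε 1, |f' x| ≤ M) :
    Tendsto
      (fun ε : ℝ => sSup {d : ℝ | ∃ x ∈ Set.Icc ε 1, ∃ y ∈ Set.Icc ε 1,
        |x - y| ≤ 2 * ε ∧ d = |f x - f y|})
      (nhdsWithin 0 (Set.Ioi 0)) (nhds 0) := by
  rw [Metric.tendsto_nhdsWithin_nhds]
  intro δ hδ
  rw [Metric.tendsto_nhdsWithin_nhds] at h3
  obtain ⟨a, ha, h3'⟩ := h3 (δ/4) (by linarith)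
  set a' := min a 1 with ha'def
  have ha'0 : 0 < a' := lt_min ha one_pos
  have ha'1 : a' ≤ 1 := min_le_right _ _
  obtain ⟨M, hM⟩ := hderivbdd a' ha'0
  have hM0 : 0 ≤ M := le_trans (abs_nonneg _) (hM 1 ⟨ha'1, le_refl 1⟩)
  refine ⟨min a' (δ/(4*(M+1))), lt_min ha'0 (by positivity), ?_⟩
  intro ε hε hεd
  simp only [Real.dist_eq, sub_zero] at hεd ⊢
  have hε0 : 0 < ε := hε
  rw [abs_of_pos hε0] at hεd
  have hεa : ε < a' := lt_of_lt_of_le hεd (min_le_left _ _)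
  have hεδ : ε < δ/(4*(M+1)) := lt_of_lt_of_le hεd (min_le_right _ _)
  have hε1 : ε ≤ 1 := le_of_lt (lt_of_lt_of_le hεa ha'1)
  -- key bound via MVT
  have key : ∀ x ∈ Set.Icc ε 1, ∀ y ∈ Set.Icc ε 1, y < x → x - y ≤ 2*ε →
      |f x - f y| ≤ δ/2 := by
    intro x hx y hy hyx hdist
    have hy0 : 0 < y := lt_of_lt_of_le hε0 hy.1
    have hsub : Set.Icc y x ⊆ Set.Ioc 0 1 := fun t ht =>
      ⟨lt_of_lt_of_le hy0 ht.1, le_trans ht.2 hx.2⟩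
    obtain ⟨c, hc, hc'⟩ := exists_hasDerivAt_eq_slope f f' hyx
      (fun t ht => (hderiv t (hsub ht)).continuousAt.continuousWithinAt)
      (fun t ht => hderiv t (hsub ⟨le_of_lt ht.1, le_of_lt ht.2⟩))
    have hcy : y < c := hc.1
    have hcx : c < x := hc.2
    have hc0 : 0 < c := lt_trans hy0 hcy
    have heq : |f x - f y| = |f' c| * (x - y) := by
      rw [hc', abs_div, abs_of_pos (by linarith : (0:ℝ) < x - y),
        div_mul_cancel₀ _ (by linarith : (x:ℝ) - y ≠ 0)]
    rw [heq]
    by_cases hca : c < a'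
    · have h4 := h3' hc0
      rw [Real.dist_eq, Real.dist_eq, sub_zero, sub_zero, abs_of_pos hc0] at h4
      have h5 : |c * f' c| < δ/4 := h4 (lt_of_lt_of_le hca (min_le_left _ _))
      have hεc : ε < c := lt_of_le_of_lt hy.1 hcy
      have : |f' c| * (x - y) ≤ |f' c| * (2*c) := by
        apply mul_le_mul_of_nonneg_left (by linarith) (abs_nonneg _)
      calc |f' c| * (x - y) ≤ |f' c| * (2*c) := this
        _ = 2 * |c * f' c| := by rw [abs_mul, abs_of_pos hc0]; ring
        _ ≤ 2 * (δ/4) := by linarith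
        _ = δ/2 := by ring
    · have hcM : |f' c| ≤ M := hM c ⟨le_of_not_gt hca, le_trans (le_of_lt hcx) hx.2⟩
      have hxy2 : x - y ≤ 2 * (δ/(4*(M+1))) := by linarith
      have hxy0 : (0:ℝ) ≤ x - y := by linarith
      calc |f' c| * (x - y) ≤ M * (2 * (δ/(4*(M+1)))) :=
            mul_le_mul hcM hxy2 hxy0 hM0
        _ ≤ δ/2 := by
            have h1 : (0:ℝ) < M + 1 := by linarith
            have he : M * (2 * (δ / (4 * (M + 1)))) = (δ/2) * (M/(M+1)) := by
              field_simp; ring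
            rw [he]
            have h2 : M/(M+1) ≤ 1 := by rw [div_le_one h1]; linarith
            nlinarith [div_nonneg hM0 h1.le]
  set S := {d : ℝ | ∃ x ∈ Set.Icc ε 1, ∃ y ∈ Set.Icc ε 1,
      |x - y| ≤ 2 * ε ∧ d = |f x - f y|} with hS
  have h0S : (0:ℝ) ∈ S := by
    refine ⟨ε, ⟨le_refl ε, hε1⟩, ε, ⟨le_refl ε, hε1⟩, ?_, ?_⟩
    · simp; linarith
    · simp
  have hub : ∀ d ∈ S, d ≤ δ/2 := by
    rintro d ⟨x, hx, y, hy, hxy, rfl⟩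
    rcases lt_trichotomy x y with h | h | h
    · rw [abs_sub_comm]
      apply key y hy x hx h
      rw [abs_sub_comm, abs_of_pos (by linarith)] at hxy
      linarith
    · simp [h]; linarith
    · apply key x hx y hy h
      rw [abs_of_pos (by linarith)] at hxy
      linarith
  have hsup_le : sSup S ≤ δ/2 := csSup_le ⟨0, h0S⟩ hub
  have hsup_ge : (0:ℝ) ≤ sSup S := le_csSup ⟨δ/2, hub⟩ h0S
  rw [abs_of_nonneg hsup_ge]
  linarith
end

section
/- Let f : (0,R] → ℝ be C¹ and bounded, with x f'(x) → 0 as x → 0⁺. Let u : B_R(0) ⊂ ℝⁿ → ℝ be the radial function u(x) = f(|x|). Then u ∈ VMO(B_R(0)): the modulus η*(r) := sup over x ∈ B_R(0) and 0 < σ < r of the mean square oscillation of u over B_σ(x) ∩ B_R(0) tends to 0 as r → 0. -/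
/-!
Write `u = f ∘ ‖·‖` and `s = B_σ(x) ∩ B_R(0)`. A variance is the least mean square deviation,
so the mean square oscillation of `u` on `s` is at most the mean of `|u - c|²` for any constant
`c`. Given `δ > 0` and `σ < δ/3`, either `|x| + σ ≤ δ` or `|x| - σ ≥ δ/3`.

In the second case take `c = u(x)` and use the uniform continuity of `f` on `[δ/3, R]`.
In the first, take `c = f(b)` with `b = |x| + σ`. Substituting `t = eᵛ` turns `|t f'(t)| ≤ C`
into `|f(b) - f(|y|)| ≤ C log (b / |y|)`, which is at most `C log κ⁻¹` outside the ball of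
radius `κ b`. That ball covers a fraction at most `6κ` of `s` (either `s` contains a ball of
radius `σ/2`, or `|x| ≥ 2σ` and the two are disjoint), and on it `|u - c| ≤ 2M`. So one chooses
`κ` with `M² κ` small, then `C` with `C log κ⁻¹` small, and `δ` from `t f'(t) → 0`.
-/

open MeasureTheory Metric Filter Set Topology ProbabilityTheory

noncomputable def meanSqOscillation {α : Type*} [MeasurableSpace α] (ν : Measure α) (g : α → ℝ) :
    ℝ :=
  ⨍ y, |g y - ⨍ z, g z ∂ν| ^ 2 ∂ν

section MeanOscillation

variable {α : Type*} [MeasurableSpace α] {ν : Measure α} [IsFiniteMeasure ν] {g : α → ℝ}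

theorem meanSqOscillation_le_average_sq_sub (hg : AEStronglyMeasurable g ν) (c : ℝ) :
    meanSqOscillation ν g ≤ ⨍ y, |g y - c| ^ 2 ∂ν := by
  rcases eq_zero_or_neZero ν with rfl | _
  · simp [meanSqOscillation]
  have hgP : AEStronglyMeasurable g ((ν univ)⁻¹ • ν) := hg.mono_ac Measure.smul_absolutelyContinuous
  -- `⨍ ∂ν` is the expectation for the normalised measure `(ν univ)⁻¹ • ν`.
  simp only [meanSqOscillation, average_eq', sq_abs]
  calc ∫ y, (g y - ∫ z, g z ∂(ν univ)⁻¹ • ν) ^ 2 ∂(ν univ)⁻¹ • ν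
      = variance (fun y => g y - c) ((ν univ)⁻¹ • ν) := by
        rw [variance_sub_const hgP, variance_eq_integral hgP.aemeasurable]
    _ ≤ ∫ y, (g y - c) ^ 2 ∂(ν univ)⁻¹ • ν :=
        variance_le_expectation_sq (hgP.sub aestronglyMeasurable_const)

theorem average_le_add_mul_of_ae_le_indicator [NeZero ν] {h : α → ℝ} (hh : Integrable h ν)
    {S : Set α} (hS : MeasurableSet S) {a b θ : ℝ} (hb : 0 ≤ b)
    (hSθ : ν.real S ≤ θ * ν.real univ) (hle : ∀ᵐ y ∂ν, h y ≤ a + S.indicator (fun _ => b) y) :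
    ⨍ y, h y ∂ν ≤ a + b * θ := by
  have hV : 0 < ν.real univ := measureReal_univ_pos
  have hint : ∫ y, h y ∂ν ≤ a * ν.real univ + b * ν.real S :=
    calc ∫ y, h y ∂ν ≤ ∫ y, (a + S.indicator (fun _ => b) y) ∂ν :=
          integral_mono_ae hh ((integrable_const a).add ((integrable_const b).indicator hS)) hle
      _ = a * ν.real univ + b * ν.real S := by
          rw [integral_add (integrable_const a) ((integrable_const b).indicator hS),
            integral_indicator hS]
          simp [mul_comm]
  rw [average_eq, smul_eq_mul, inv_mul_le_iff₀ hV]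
  nlinarith [mul_le_mul_of_nonneg_left hSθ hb]

theorem meanSqOscillation_le_of_ae_abs_sub_le (hg : AEStronglyMeasurable g ν) {S : Set α}
    (hS : MeasurableSet S) {θ : ℝ} (hθ : 0 ≤ θ) (hSθ : ν.real S ≤ θ * ν.real univ)
    {c B₁ B₂ : ℝ} (h_off : ∀ᵐ y ∂ν, y ∉ S → |g y - c| ≤ B₁)
    (h_all : ∀ᵐ y ∂ν, |g y - c| ≤ B₂) :
    meanSqOscillation ν g ≤ B₁ ^ 2 + B₂ ^ 2 * θ := by
  rcases eq_zero_or_neZero ν with rfl | _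
  · simp only [meanSqOscillation, average_zero_measure]
    positivity
  have hsq : ∀ {y} {B : ℝ}, |g y - c| ≤ B → |g y - c| ^ 2 ≤ B ^ 2 :=
    fun h => pow_le_pow_left₀ (abs_nonneg _) h 2
  have hint : Integrable (fun y => |g y - c| ^ 2) ν := by
    refine Integrable.of_bound (by fun_prop) (B₂ ^ 2) ?_
    filter_upwards [h_all] with y hy
    simpa using hsq hy
  refine (meanSqOscillation_le_average_sq_sub hg c).trans
    (average_le_add_mul_of_ae_le_indicator hint hS (sq_nonneg _) hSθ ?_)
  filter_upwards [h_off, h_all] with y hoff hall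
  by_cases hy : y ∈ S
  · simpa [hy] using (hsq hall).trans (le_add_of_nonneg_left (sq_nonneg B₁))
  · simpa [hy] using hsq (hoff hy)

theorem meanSqOscillation_le_sq_of_ae_abs_sub_le (hg : AEStronglyMeasurable g ν) {c B : ℝ}
    (h : ∀ᵐ y ∂ν, |g y - c| ≤ B) : meanSqOscillation ν g ≤ B ^ 2 := by
  simpa using meanSqOscillation_le_of_ae_abs_sub_le hg MeasurableSet.empty le_rfl (by simp)
    (h.mono fun _ hy _ => hy) h

end MeanOscillation

theorem abs_sub_le_mul_log_div_of_abs_mul_deriv_le {f f' : ℝ → ℝ} {a b C : ℝ} (ha : 0 < a)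
    (hab : a ≤ b) (hf : ∀ t ∈ Icc a b, HasDerivAt f (f' t) t)
    (hC : ∀ t ∈ Icc a b, |t * f' t| ≤ C) :
    |f b - f a| ≤ C * Real.log (b / a) := by
  have hb : 0 < b := ha.trans_le hab
  have hexp : ∀ s ∈ Icc (Real.log a) (Real.log b), Real.exp s ∈ Icc a b := fun s hs =>
    ⟨(Real.log_le_iff_le_exp ha).1 hs.1, (Real.le_log_iff_exp_le hb).1 hs.2⟩
  have key := norm_image_sub_le_of_norm_deriv_le_segment' (f := f ∘ Real.exp)
    (f' := fun s => f' (Real.exp s) * Real.exp s)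
    (fun s hs => ((hf _ (hexp s hs)).comp s (Real.hasDerivAt_exp s)).hasDerivWithinAt)
    (fun s hs => by simpa [mul_comm] using hC _ (hexp s (Ico_subset_Icc_self hs)))
    (Real.log b) ⟨Real.log_le_log ha hab, le_rfl⟩
  simpa [Real.exp_log ha, Real.exp_log hb, Real.log_div hb.ne' ha.ne'] using key

section Geometry

variable {E : Type*} [NormedAddCommGroup E] [NormedSpace ℝ E]

theorem exists_ball_subset_ball_inter_ball {x : E} {R σ : ℝ} (hx : ‖x‖ < R) (hσ : 0 ≤ σ)
    (hσR : σ ≤ R) : ∃ x', ball x' (σ / 2) ⊆ ball x σ ∩ ball 0 R := by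
  by_cases hxσ : ‖x‖ ≤ σ / 2
  · refine ⟨0, subset_inter (ball_subset_ball' ?_) (ball_subset_ball (by linarith))⟩
    rw [dist_comm, dist_zero_right]
    linarith
  · have hx0 : 0 < ‖x‖ := by linarith
    set t := σ / 2 / ‖x‖
    have ht : t * ‖x‖ = σ / 2 := div_mul_cancel₀ _ hx0.ne'
    have ht1 : t ≤ 1 := (div_le_one hx0).2 (by linarith)
    refine ⟨(1 - t) • x, subset_inter (ball_subset_ball' ?_) (ball_subset_ball' ?_)⟩
    · rw [dist_eq_norm, show (1 - t) • x - x = -(t • x) by module, norm_neg, norm_smul,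
        Real.norm_of_nonneg (by positivity), ht]
      linarith
    · rw [dist_zero_right, norm_smul, Real.norm_of_nonneg (by linarith), sub_mul, ht]
      linarith

variable [FiniteDimensional ℝ E] [MeasurableSpace E] [BorelSpace E] (μ : Measure E)
  [μ.IsAddHaarMeasure]

theorem measureReal_closedBall_inter_le [Nontrivial E] {x : E} {R σ ρ κ : ℝ} (hx : ‖x‖ < R)
    (hσ : 0 < σ) (hσR : σ ≤ R) (hκ₀ : 0 ≤ κ) (hκ₁ : 6 * κ ≤ 1) (hρ : ρ ≤ κ * (‖x‖ + σ)) :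
    μ.real (closedBall 0 ρ ∩ (ball x σ ∩ ball 0 R)) ≤ 6 * κ * μ.real (ball x σ ∩ ball 0 R) := by
  by_cases hxσ : ‖x‖ < 2 * σ
  · obtain ⟨x', hx'⟩ := exists_ball_subset_ball_inter_ball hx hσ.le hσR
    have hρσ : ρ ≤ 6 * κ * (σ / 2) := by nlinarith
    calc μ.real (closedBall 0 ρ ∩ (ball x σ ∩ ball 0 R))
        ≤ μ.real (closedBall 0 (6 * κ * (σ / 2))) :=
          measureReal_mono (inter_subset_left.trans (closedBall_subset_closedBall hρσ))
            measure_closedBall_lt_top.ne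
      _ = (6 * κ) ^ Module.finrank ℝ E * μ.real (ball x' (σ / 2)) := by
          rw [← Measure.addHaar_real_closedBall_eq_addHaar_real_ball,
            Measure.addHaar_real_closedBall μ _ (by positivity),
            Measure.addHaar_real_closedBall μ _ (by positivity), mul_pow, mul_assoc]
      _ ≤ 6 * κ * μ.real (ball x σ ∩ ball 0 R) := by
          gcongr
          · exact pow_le_of_le_one (by positivity) hκ₁ Module.finrank_pos.ne'
          · exact ((measure_mono inter_subset_left).trans_lt (measure_ball_lt_top (μ := μ))).ne
  · have hempty : closedBall 0 ρ ∩ ball x σ = ∅ := by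
      refine eq_empty_of_forall_notMem fun y ⟨hyρ, hyx⟩ => ?_
      rw [mem_closedBall_zero_iff] at hyρ
      rw [mem_ball_iff_norm'] at hyx
      nlinarith [norm_sub_norm_le x y]
    rw [← inter_assoc, hempty, empty_inter, measureReal_empty]
    positivity

end Geometry

section Radial

variable {E : Type*} [NormedAddCommGroup E] [MeasurableSpace E] [BorelSpace E]

theorem aestronglyMeasurable_comp_norm (μ : Measure E) [NullSingletonClass μ] {f : ℝ → ℝ}
    {R : ℝ} (hf : ContinuousOn f (Ioc 0 R)) {s : Set E} (hs : MeasurableSet s)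
    (hsR : s ⊆ closedBall 0 R) : AEStronglyMeasurable (fun y => f ‖y‖) (μ.restrict s) := by
  rw [← Measure.restrict_congr_set (sdiff_null_ae_eq_self (measure_singleton 0))]
  refine (hf.comp continuous_norm.continuousOn fun y hy => ?_).aestronglyMeasurable
    (hs.diff (measurableSet_singleton 0))
  exact ⟨norm_pos_iff.2 hy.2, mem_closedBall_zero_iff.1 (hsR hy.1)⟩

instance isFiniteMeasure_restrict_ball_inter [ProperSpace E] (μ : Measure E)
    [IsFiniteMeasureOnCompacts μ] (x : E) (r : ℝ) (t : Set E) :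
    IsFiniteMeasure (μ.restrict (ball x r ∩ t)) :=
  isFiniteMeasure_restrict.2 (isBounded_ball.subset inter_subset_left).measure_lt_top.ne

variable [NormedSpace ℝ E] [FiniteDimensional ℝ E] (μ : Measure E) [μ.IsAddHaarMeasure]
  [Nontrivial E]

theorem meanSqOscillation_comp_norm_le_of_near_origin {f f' : ℝ → ℝ} {R M δ C κ : ℝ}
    (hf : ∀ t ∈ Ioc 0 R, HasDerivAt f (f' t) t) (hM : ∀ t ∈ Ioc 0 R, |f t| ≤ M)
    (hδR : δ ≤ R) (hC : ∀ t ∈ Ioc 0 δ, |t * f' t| ≤ C) (hκ₀ : 0 < κ) (hκ₁ : 6 * κ ≤ 1)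
    {x : E} {σ : ℝ} (hσ : 0 < σ) (hxσ : ‖x‖ + σ ≤ δ) :
    meanSqOscillation (μ.restrict (ball x σ ∩ ball 0 R)) (fun y => f ‖y‖) ≤
      (C * Real.log κ⁻¹) ^ 2 + (2 * M) ^ 2 * (6 * κ) := by
  set s := ball x σ ∩ ball (0 : E) R
  set b := ‖x‖ + σ
  have hs : MeasurableSet s := measurableSet_ball.inter measurableSet_ball
  have hb : 0 < b := by positivity
  have hbR : b ≤ R := hxσ.trans hδR
  have hσR : σ ≤ R := by linarith [norm_nonneg x]
  have hx : ‖x‖ < R := by linarith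
  have hnorm_lt : ∀ y ∈ s, ‖y‖ < b := fun y hy => by
    linarith [norm_le_norm_add_norm_sub' y x, mem_ball_iff_norm.1 hy.1]
  have hC₀ : 0 ≤ C := (abs_nonneg _).trans (hC δ ⟨hb.trans_le hxσ, le_rfl⟩)
  refine meanSqOscillation_le_of_ae_abs_sub_le (S := closedBall 0 (κ * b)) (c := f b)
    (aestronglyMeasurable_comp_norm μ (fun t ht => (hf t ht).continuousAt.continuousWithinAt) hs
      (inter_subset_right.trans ball_subset_closedBall))
    measurableSet_closedBall (by positivity) ?_ ?_ ?_
  · rw [measureReal_restrict_apply measurableSet_closedBall, measureReal_restrict_apply_univ]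
    exact measureReal_closedBall_inter_le μ hx hσ hσR hκ₀.le hκ₁ le_rfl
  · filter_upwards [ae_restrict_mem hs] with y hy hyS
    have hy₀ : κ * b < ‖y‖ := by simpa using hyS
    have hy₀' : 0 < ‖y‖ := (mul_pos hκ₀ hb).trans hy₀
    rw [abs_sub_comm]
    calc |f b - f ‖y‖| ≤ C * Real.log (b / ‖y‖) :=
          abs_sub_le_mul_log_div_of_abs_mul_deriv_le hy₀' (hnorm_lt y hy).le
            (fun t ht => hf t ⟨hy₀'.trans_le ht.1, ht.2.trans hbR⟩)
            (fun t ht => hC t ⟨hy₀'.trans_le ht.1, ht.2.trans hxσ⟩)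
      _ ≤ C * Real.log κ⁻¹ := by
          gcongr
          rw [div_le_iff₀ hy₀', inv_mul_eq_div, le_div_iff₀ hκ₀]
          linarith
  · filter_upwards [ae_restrict_mem hs, ae_restrict_of_ae (Measure.ae_ne μ 0)] with y hy hy0
    calc |f ‖y‖ - f b| ≤ |f ‖y‖| + |f b| := abs_sub _ _
      _ ≤ 2 * M := by
          linarith [hM ‖y‖ ⟨norm_pos_iff.2 hy0, (mem_ball_zero_iff.1 hy.2).le⟩, hM b ⟨hb, hbR⟩]

theorem exists_meanSqOscillation_comp_norm_le_near_origin {f f' : ℝ → ℝ} {R M : ℝ} (hR : 0 < R)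
    (hf : ∀ t ∈ Ioc 0 R, HasDerivAt f (f' t) t) (hM : ∀ t ∈ Ioc 0 R, |f t| ≤ M)
    (hf' : Tendsto (fun t => t * f' t) (𝓝[>] 0) (𝓝 0)) {ε : ℝ} (hε : 0 < ε) :
    ∃ δ > 0, ∀ (x : E) (σ : ℝ), 0 < σ → ‖x‖ + σ ≤ δ →
      meanSqOscillation (μ.restrict (ball x σ ∩ ball 0 R)) (fun y => f ‖y‖) ≤ ε := by
  obtain ⟨κ, hκ₀, hκ₁, hκM⟩ : ∃ κ : ℝ, 0 < κ ∧ 6 * κ ≤ 1 ∧ (2 * M) ^ 2 * (6 * κ) ≤ ε / 2 :=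
    ⟨min (1 / 6) (ε / (48 * M ^ 2 + 1)), by positivity,
      by linarith [min_le_left (1 / 6 : ℝ) (ε / (48 * M ^ 2 + 1))], by
      grw [min_le_right (1 / 6 : ℝ)]
      rw [← mul_div_assoc, ← mul_div_assoc, div_le_div_iff₀ (by positivity) two_pos]
      nlinarith⟩
  have hlogκ : 0 < Real.log κ⁻¹ := Real.log_pos ((one_lt_inv₀ hκ₀).2 (by linarith))
  set C := √(ε / 2) / Real.log κ⁻¹
  obtain ⟨δ, hδ, hC⟩ := mem_nhdsGT_iff_exists_Ioc_subset.1
    (hf' (closedBall_mem_nhds 0 (by positivity : 0 < C)))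
  refine ⟨min δ R, lt_min hδ hR, fun x σ hσ hxσ => ?_⟩
  calc _ ≤ (C * Real.log κ⁻¹) ^ 2 + (2 * M) ^ 2 * (6 * κ) :=
        meanSqOscillation_comp_norm_le_of_near_origin μ hf hM (min_le_right _ _)
          (fun t ht => by simpa using hC ⟨ht.1, ht.2.trans (min_le_left _ _)⟩) hκ₀ hκ₁ hσ hxσ
    _ ≤ ε := by
        rw [div_mul_cancel₀ _ hlogκ.ne', Real.sq_sqrt (by positivity)]
        linarith

theorem exists_meanSqOscillation_comp_norm_le_away_from_origin {f : ℝ → ℝ} {R a : ℝ}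
    (hf : ContinuousOn f (Ioc 0 R)) (ha : 0 < a) {ε : ℝ} (hε : 0 < ε) :
    ∃ η > 0, ∀ (x : E) (σ : ℝ), ‖x‖ < R → σ ≤ η → a ≤ ‖x‖ - σ →
      meanSqOscillation (μ.restrict (ball x σ ∩ ball 0 R)) (fun y => f ‖y‖) ≤ ε := by
  obtain ⟨η, hη, hfη⟩ := Metric.uniformContinuousOn_iff.1
    (isCompact_Icc.uniformContinuousOn_of_continuous
      (hf.mono fun t ht => ⟨ha.trans_le ht.1, ht.2⟩)) √ε (by positivity)
  refine ⟨η, hη, fun x σ hx hση haσ => ?_⟩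
  set s := ball x σ ∩ ball (0 : E) R
  have hs : MeasurableSet s := measurableSet_ball.inter measurableSet_ball
  refine (meanSqOscillation_le_sq_of_ae_abs_sub_le (c := f ‖x‖)
    (aestronglyMeasurable_comp_norm μ hf hs (inter_subset_right.trans ball_subset_closedBall))
    ?_).trans (Real.sq_sqrt hε.le).le
  filter_upwards [ae_restrict_mem hs] with y hy
  have hyx : dist ‖y‖ ‖x‖ < σ := (dist_norm_norm_le y x).trans_lt (mem_ball_iff_norm.1 hy.1)
  have hy : ‖y‖ ∈ Icc a R := ⟨by linarith [abs_lt.1 (Real.dist_eq _ _ ▸ hyx)],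
    (mem_ball_zero_iff.1 hy.2).le⟩
  exact (hfη _ hy _ ⟨by linarith [dist_nonneg.trans_lt hyx], hx.le⟩ (hyx.trans_le hση)).le

end Radial

theorem radial_vmo_general {n : ℕ} (R : ℝ) (hR : 0 < R) (f f' : ℝ → ℝ)
    (hderiv : ∀ x ∈ Set.Ioc (0:ℝ) R, HasDerivAt f (f' x) x)
    (hbdd : ∃ M : ℝ, ∀ x ∈ Set.Ioc (0:ℝ) R, |f x| ≤ M)
    (h3 : Tendsto (fun x => x * f' x) (nhdsWithin 0 (Set.Ioi 0)) (nhds 0)) :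
    ∀ ε : ℝ, 0 < ε → ∃ r : ℝ, 0 < r ∧
      ∀ x ∈ ball (0 : EuclideanSpace ℝ (Fin n)) R, ∀ σ : ℝ, 0 < σ → σ < r →
        (⨍ y in ball x σ ∩ ball (0 : EuclideanSpace ℝ (Fin n)) R,
          |f ‖y‖ - ⨍ z in ball x σ ∩ ball (0 : EuclideanSpace ℝ (Fin n)) R, f ‖z‖| ^ 2)
          ≤ ε := by
  obtain ⟨M, hM⟩ := hbdd
  intro ε hε
  rcases subsingleton_or_nontrivial (EuclideanSpace ℝ (Fin n)) with _ | _
  · refine ⟨1, one_pos, fun x _ σ _ _ => ?_⟩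
    refine (meanSqOscillation_le_sq_of_ae_abs_sub_le (c := f ‖x‖) (B := 0)
      Subsingleton.measurable.aestronglyMeasurable (ae_of_all _ fun y => ?_)).trans ?_
    · simp [Subsingleton.elim y x]
    · simpa using hε.le
  let E := EuclideanSpace ℝ (Fin n)
  obtain ⟨δ, hδ, hnear⟩ :=
    exists_meanSqOscillation_comp_norm_le_near_origin (E := E) volume hR hderiv hM h3 hε
  obtain ⟨η, hη, hfar⟩ := exists_meanSqOscillation_comp_norm_le_away_from_origin (E := E) volume
    (fun t ht => (hderiv t ht).continuousAt.continuousWithinAt) (div_pos hδ three_pos) hε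
  refine ⟨min (δ / 3) η, lt_min (by positivity) hη, fun x hx σ hσ hσr => ?_⟩
  rw [mem_ball_zero_iff] at hx
  by_cases hxσ : ‖x‖ + σ ≤ δ
  · exact hnear x σ hσ hxσ
  · exact hfar x σ hx (hσr.le.trans (min_le_right _ _)) (by linarith [min_le_left (δ / 3) η])

/-- Bramanti's Radial VMO theorem (bounded case): if `f` is `C¹` and bounded on `(0,R]`
with `x f'(x) → 0` as `x → 0⁺`, then the radial function `u(x) = f(|x|)` belongs to
`VMO(B_R(0))`: its mean square oscillation over small balls intersected with `B_R(0)`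
tends to `0` uniformly. -/
theorem radial_vmo {n : ℕ} (R : ℝ) (hR : 0 < R) (f f' : ℝ → ℝ)
    (hderiv : ∀ x ∈ Set.Ioc (0:ℝ) R, HasDerivAt f (f' x) x)
    (hderivc : ContinuousOn f' (Set.Ioc (0:ℝ) R))
    (hbdd : ∃ M : ℝ, ∀ x ∈ Set.Ioc (0:ℝ) R, |f x| ≤ M)
    (h3 : Tendsto (fun x => x * f' x) (nhdsWithin 0 (Set.Ioi 0)) (nhds 0)) :
    ∀ ε : ℝ, 0 < ε → ∃ r : ℝ, 0 < r ∧
      ∀ x ∈ ball (0 : EuclideanSpace ℝ (Fin n)) R, ∀ σ : ℝ, 0 < σ → σ < r →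
        (⨍ y in ball x σ ∩ ball (0 : EuclideanSpace ℝ (Fin n)) R,
          |f ‖y‖ - ⨍ z in ball x σ ∩ ball (0 : EuclideanSpace ℝ (Fin n)) R, f ‖z‖| ^ 2)
          ≤ ε :=
  radial_vmo_general R hR f f' hderiv hbdd h3
end

section
/- Let w_k, w_∞ be continuous nonnegative functions on B₁ with w_k → w_∞ uniformly on compact subsets of B₁. Assume each w_k satisfies the nondegeneracy property: for every x₀ ∈ closure{w_k > 0} ∩ B₁ and every r with B_r(x₀) ⊂ B₁, sup_{B_r(x₀)} w_k ≥ C r² for a fixed constant C > 0. If the closed ball of radius r about x₀ is contained in {w_∞ = 0} and is contained in B₁, then for all sufficiently large k, w_k ≡ 0 on the closed ball of radius r/2 about x₀. -/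
open MeasureTheory Metric Filter

/-!
Locally uniform convergence is uniform on the compact ball `closedBall x₀ r`, so for large `k`
the function `w k` is smaller than `C (r/2)²` there. If `w k` were positive at some `x` with
`dist x x₀ ≤ r/2`, then `x` lies in the closure of the positivity set, and nondegeneracy at `x`
with radius `r/2` yields a point of `closedBall x (r/2) ⊆ closedBall x₀ r` where
`w k ≥ C (r/2)²`, a contradiction.
-/

theorem TendstoUniformlyOn.eventually_forall_lt_of_eq_zero {ι α : Type*} {p : Filter ι}
    {F : ι → α → ℝ} {f : α → ℝ} {s : Set α} (h : TendstoUniformlyOn F f p s)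
    (hf : ∀ y ∈ s, f y = 0) {ε : ℝ} (hε : 0 < ε) :
    ∀ᶠ k in p, ∀ y ∈ s, F k y < ε := by
  filter_upwards [Metric.tendstoUniformlyOn_iff.mp h ε hε] with k hk y hy
  have hdist := hk y hy
  rw [hf y hy, dist_zero_left] at hdist
  exact (le_abs_self _).trans_lt hdist

section PseudoMetricSpace

variable {X : Type*} [PseudoMetricSpace X]

theorem closedBall_half_subset_closedBall {x₀ x : X} {r : ℝ} (hx : x ∈ closedBall x₀ (r / 2)) :
    closedBall x (r / 2) ⊆ closedBall x₀ r :=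
  closedBall_subset_closedBall' (by linarith [mem_closedBall.mp hx])

theorem eq_zero_on_closedBall_half_of_nondegenerate {u : X → ℝ} {x₀ : X} {r c : ℝ}
    (hnn : ∀ x ∈ closedBall x₀ (r / 2), 0 ≤ u x)
    (hsmall : ∀ y ∈ closedBall x₀ r, u y < c)
    (hnondeg : ∀ x ∈ closedBall x₀ (r / 2), x ∈ closure {y | 0 < u y} →
      ∃ y ∈ closedBall x (r / 2), c ≤ u y) :
    ∀ x ∈ closedBall x₀ (r / 2), u x = 0 := by
  intro x hx
  by_contra hne
  have hpos : 0 < u x := (hnn x hx).lt_of_ne' hne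
  obtain ⟨y, hy, hcy⟩ := hnondeg x hx (subset_closure hpos)
  exact (hsmall y (closedBall_half_subset_closedBall hx hy)).not_ge hcy

end PseudoMetricSpace

theorem zero_set_stability_general {n : ℕ}
    (w : ℕ → EuclideanSpace ℝ (Fin n) → ℝ) (wlim : EuclideanSpace ℝ (Fin n) → ℝ)
    (hwnn : ∀ k, ∀ x ∈ ball (0 : EuclideanSpace ℝ (Fin n)) 1, 0 ≤ w k x)
    (hconv : TendstoLocallyUniformlyOn w wlim atTop (ball 0 1))
    (C : ℝ) (hC : 0 < C)
    (hnondeg : ∀ k, ∀ x₀ : EuclideanSpace ℝ (Fin n), ∀ r : ℝ, 0 < r →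
      ball x₀ r ⊆ ball 0 1 →
      x₀ ∈ closure {x | 0 < w k x} →
      ∃ x ∈ closedBall x₀ r, C * r ^ 2 ≤ w k x)
    (x₀ : EuclideanSpace ℝ (Fin n)) (r : ℝ) (hr : 0 < r)
    (hsub : closedBall x₀ r ⊆ ball 0 1)
    (hzero : closedBall x₀ r ⊆ {x | wlim x = 0}) :
    ∀ᶠ k in atTop, ∀ x ∈ closedBall x₀ (r / 2), w k x = 0 := by
  have hunif : TendstoUniformlyOn w wlim atTop (closedBall x₀ r) :=
    (tendstoLocallyUniformlyOn_iff_forall_isCompact isOpen_ball).mp hconv _ hsub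
      (isCompact_closedBall x₀ r)
  have hε : 0 < C * (r / 2) ^ 2 := by positivity
  filter_upwards [hunif.eventually_forall_lt_of_eq_zero (fun y hy => hzero hy) hε] with k hsmall
  refine eq_zero_on_closedBall_half_of_nondegenerate
    (fun x hx => hwnn k x (hsub (closedBall_subset_closedBall (half_le_self hr.le) hx)))
    hsmall (fun x hx => hnondeg k x (r / 2) (half_pos hr) ?_)
  exact ball_subset_closedBall.trans ((closedBall_half_subset_closedBall hx).trans hsub)

/-- If `w_k → w_∞` locally uniformly, each `w_k` is nondegenerate, and a closed ball lies
in the zero set of `w_∞`, then `w_k` vanishes identically on the half ball for large `k`. -/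
theorem zero_set_stability {n : ℕ}
    (w : ℕ → EuclideanSpace ℝ (Fin n) → ℝ) (wlim : EuclideanSpace ℝ (Fin n) → ℝ)
    (hwc : ∀ k, ContinuousOn (w k) (ball 0 1)) (hwlimc : ContinuousOn wlim (ball 0 1))
    (hwnn : ∀ k, ∀ x ∈ ball (0 : EuclideanSpace ℝ (Fin n)) 1, 0 ≤ w k x)
    (hwlimnn : ∀ x ∈ ball (0 : EuclideanSpace ℝ (Fin n)) 1, 0 ≤ wlim x)
    (hconv : TendstoLocallyUniformlyOn w wlim atTop (ball 0 1))
    (C : ℝ) (hC : 0 < C)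
    (hnondeg : ∀ k, ∀ x₀ : EuclideanSpace ℝ (Fin n), ∀ r : ℝ, 0 < r →
      ball x₀ r ⊆ ball 0 1 →
      x₀ ∈ closure {x | 0 < w k x} →
      ∃ x ∈ closedBall x₀ r, C * r ^ 2 ≤ w k x)
    (x₀ : EuclideanSpace ℝ (Fin n)) (r : ℝ) (hr : 0 < r)
    (hsub : closedBall x₀ r ⊆ ball 0 1)
    (hzero : closedBall x₀ r ⊆ {x | wlim x = 0}) :
    ∀ᶠ k in atTop, ∀ x ∈ closedBall x₀ (r / 2), w k x = 0 :=
  zero_set_stability_general w wlim hwnn hconv C hC hnondeg x₀ r hr hsub hzero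
end

section
/- Let w_β (for β ∈ [a,b]) be a family of continuous functions on the closed unit ball, monotone in β (w_β ≤ w_{β'} pointwise whenever β' ≤ β) and depending continuously on β in the uniform norm. Suppose each w_β ≥ 0 and each satisfies the nondegeneracy property: if w_β(x₀) > 0 and B_r(x₀) ⊂ B₁ then sup_{B_r(x₀)} w_β ≥ Cr². Define β₀ := inf{β ∈ [a,b] : w_β(0) = 0} and assume a < β₀, w_a(0) > 0, and w_b(0) = 0. Then w_{β₀}(0) = 0 and 0 ∈ ∂{w_{β₀} > 0}, i.e., 0 is a free boundary point of w_{β₀}. -/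
/-!
Let `S` be the set of parameters `β` with `w_β(0) = 0`. Uniform continuity in `β` makes
`β ↦ w_β(0)` continuous, so `S` is closed and contains `β₀ = inf S`. If `0` were not in the
closure of `{w_{β₀} > 0}`, then `w_{β₀} ≤ 0` on a small ball `B_r`. For `β ↑ β₀` we have
`w_β(0) > 0`, so nondegeneracy gives points of `B_r` where `w_β ≥ C r²`; uniform convergence
`w_β → w_{β₀}` on `B_r` then forces `C r² ≤ 0`.
-/

open Metric Filter Topology Set

theorem TendstoUniformlyOn.le_of_frequently_exists_le {ι X : Type*} {F : ι → X → ℝ} {f : X → ℝ}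
    {p : Filter ι} {K : Set X} {c m : ℝ} (hF : TendstoUniformlyOn F f p K)
    (hc : ∃ᶠ i in p, ∃ x ∈ K, c ≤ F i x) (hf : ∀ x ∈ K, f x ≤ m) : c ≤ m := by
  by_contra! hmc
  obtain ⟨i, hclose, x, hxK, hcx⟩ :=
    ((Metric.tendstoUniformlyOn_iff.mp hF (c - m) (by linarith)).and_frequently hc).exists
  have := hclose x hxK
  rw [Real.dist_eq, abs_sub_lt_iff] at this
  linarith [hf x hxK]

theorem tendstoUniformlyOn_nhdsWithin_of_abs_sub_le {X : Type*} {w : ℝ → X → ℝ} {s : Set ℝ}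
    {K : Set X} {β : ℝ} (h : ∀ ε : ℝ, 0 < ε → ∃ δ : ℝ, 0 < δ ∧
      ∀ β' ∈ s, |β' - β| < δ → ∀ x ∈ K, |w β' x - w β x| ≤ ε) :
    TendstoUniformlyOn w (w β) (𝓝[s] β) K := by
  refine Metric.tendstoUniformlyOn_iff.mpr fun ε hε => ?_
  obtain ⟨δ, hδ, hδw⟩ := h (ε / 2) (half_pos hε)
  rw [eventually_nhdsWithin_iff, Metric.eventually_nhds_iff]
  refine ⟨δ, hδ, fun β' hβ' hβ's x hx => ?_⟩
  rw [dist_comm, Real.dist_eq]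
  exact (hδw β' hβ's hβ' x hx).trans_lt (half_lt_self hε)

theorem mem_closure_setOf_pos_of_tendstoUniformlyOn {ι X : Type*} [PseudoMetricSpace X]
    {F : ι → X → ℝ} {f : X → ℝ} {p : Filter ι} {x₀ : X} {ρ C : ℝ} (hρ : 0 < ρ) (hC : 0 < C)
    (hF : TendstoUniformlyOn F f p (closedBall x₀ ρ))
    (hnd : ∀ r, 0 < r → r ≤ ρ → ∃ᶠ i in p, ∃ x ∈ closedBall x₀ r, C * r ^ 2 ≤ F i x) :
    x₀ ∈ closure {x | 0 < f x} := by
  by_contra h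
  obtain ⟨ε, hε, hball⟩ :=
    nhds_basis_closedBall.mem_iff.mp (isClosed_closure.isOpen_compl.mem_nhds h)
  set r := min ε ρ
  have hr : 0 < r := lt_min hε hρ
  have hf : ∀ x ∈ closedBall x₀ r, f x ≤ 0 := fun x hx => not_lt.mp fun hfx =>
    hball (closedBall_subset_closedBall (min_le_left ε ρ) hx) (subset_closure hfx)
  have hCr : C * r ^ 2 ≤ 0 :=
    (hF.mono (closedBall_subset_closedBall (min_le_right ε ρ))).le_of_frequently_exists_le
      (hnd r hr (min_le_right ε ρ)) hf
  exact (mul_pos hC (pow_pos hr 2)).not_ge hCr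

theorem sliding_free_boundary_point_general {n : ℕ} (a b : ℝ) (hab : a ≤ b)
    (w : ℝ → EuclideanSpace ℝ (Fin n) → ℝ)
    (hwnn : ∀ β ∈ Set.Icc a b, ∀ x ∈ closedBall (0 : EuclideanSpace ℝ (Fin n)) 1, 0 ≤ w β x)
    (hcont : ∀ β ∈ Set.Icc a b, ∀ ε : ℝ, 0 < ε → ∃ δ : ℝ, 0 < δ ∧
      ∀ β' ∈ Set.Icc a b, |β' - β| < δ →
        ∀ x ∈ closedBall (0 : EuclideanSpace ℝ (Fin n)) 1, |w β' x - w β x| ≤ ε)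
    (C : ℝ) (hC : 0 < C)
    (hnondeg : ∀ β ∈ Set.Icc a b, ∀ x₀ : EuclideanSpace ℝ (Fin n), ∀ r : ℝ,
      0 < w β x₀ → 0 < r → ball x₀ r ⊆ ball 0 1 →
      ∃ x ∈ closedBall x₀ r, C * r ^ 2 ≤ w β x)
    (β₀ : ℝ) (hβ₀def : β₀ = sInf {β | β ∈ Set.Icc a b ∧ w β 0 = 0})
    (haβ₀ : a < β₀) (hwb : w b 0 = 0) :
    w β₀ 0 = 0 ∧ (0 : EuclideanSpace ℝ (Fin n)) ∈ frontier {x | 0 < w β₀ x} := by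
  set S := {β | β ∈ Icc a b ∧ w β 0 = 0}
  have h0 : (0 : EuclideanSpace ℝ (Fin n)) ∈ closedBall 0 1 := mem_closedBall_self zero_le_one
  have hunif : ∀ β ∈ Icc a b, TendstoUniformlyOn w (w β) (𝓝[Icc a b] β) (closedBall 0 1) :=
    fun β hβ => tendstoUniformlyOn_nhdsWithin_of_abs_sub_le (hcont β hβ)
  have hSbdd : BddBelow S := ⟨a, fun β hβ => hβ.1.1⟩
  have hβ₀S : β₀ ∈ S := hβ₀def ▸
    ((ContinuousOn.preimage_isClosed_of_isClosed (fun β hβ => (hunif β hβ).tendsto_at h0)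
      isClosed_Icc isClosed_singleton).csInf_mem ⟨b, ⟨hab, le_rfl⟩, hwb⟩ hSbdd)
  have hpos : ∀ β ∈ Ico a β₀, 0 < w β 0 := fun β hβ =>
    have hβI : β ∈ Icc a b := ⟨hβ.1, hβ.2.le.trans hβ₀S.1.2⟩
    (hwnn β hβI 0 h0).lt_of_ne' fun hw => hβ.2.not_ge (hβ₀def ▸ csInf_le hSbdd ⟨hβI, hw⟩)
  have hclosure : (0 : EuclideanSpace ℝ (Fin n)) ∈ closure {x | 0 < w β₀ x} := by
    refine mem_closure_setOf_pos_of_tendstoUniformlyOn one_pos hC (hunif β₀ hβ₀S.1)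
      fun r hr hr1 => ?_
    have := right_nhdsWithin_Ico_neBot haβ₀
    have hev : ∀ᶠ β in 𝓝[Ico a β₀] β₀, ∃ x ∈ closedBall 0 r, C * r ^ 2 ≤ w β x := by
      filter_upwards [self_mem_nhdsWithin] with β hβ
      exact hnondeg β ⟨hβ.1, hβ.2.le.trans hβ₀S.1.2⟩ 0 r (hpos β hβ) hr (ball_subset_ball hr1)
    exact hev.frequently.filter_mono
      (nhdsWithin_mono _ (Ico_subset_Icc_self.trans (Icc_subset_Icc_right hβ₀S.1.2)))
  refine ⟨hβ₀S.2, ?_⟩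
  rw [← closure_sdiff_interior]
  exact ⟨hclosure, fun h => (interior_subset h).ne' hβ₀S.2⟩

/-- The sliding argument: for a monotone, uniformly continuous family of nonnegative
nondegenerate functions, the critical parameter `β₀` produces a solution with the origin
on its free boundary. -/
theorem sliding_free_boundary_point {n : ℕ} (a b : ℝ) (hab : a ≤ b)
    (w : ℝ → EuclideanSpace ℝ (Fin n) → ℝ)
    (hwc : ∀ β ∈ Set.Icc a b, ContinuousOn (w β) (closedBall 0 1))
    (hwnn : ∀ β ∈ Set.Icc a b, ∀ x ∈ closedBall (0 : EuclideanSpace ℝ (Fin n)) 1, 0 ≤ w β x)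
    (hmono : ∀ β ∈ Set.Icc a b, ∀ β' ∈ Set.Icc a b, β' ≤ β →
      ∀ x ∈ closedBall (0 : EuclideanSpace ℝ (Fin n)) 1, w β x ≤ w β' x)
    (hcont : ∀ β ∈ Set.Icc a b, ∀ ε : ℝ, 0 < ε → ∃ δ : ℝ, 0 < δ ∧
      ∀ β' ∈ Set.Icc a b, |β' - β| < δ →
        ∀ x ∈ closedBall (0 : EuclideanSpace ℝ (Fin n)) 1, |w β' x - w β x| ≤ ε)
    (C : ℝ) (hC : 0 < C)
    (hnondeg : ∀ β ∈ Set.Icc a b, ∀ x₀ : EuclideanSpace ℝ (Fin n), ∀ r : ℝ,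
      0 < w β x₀ → 0 < r → ball x₀ r ⊆ ball 0 1 →
      ∃ x ∈ closedBall x₀ r, C * r ^ 2 ≤ w β x)
    (β₀ : ℝ) (hβ₀def : β₀ = sInf {β | β ∈ Set.Icc a b ∧ w β 0 = 0})
    (haβ₀ : a < β₀) (hwa : 0 < w a 0) (hwb : w b 0 = 0) :
    w β₀ 0 = 0 ∧ (0 : EuclideanSpace ℝ (Fin n)) ∈ frontier {x | 0 < w β₀ x} :=
  sliding_free_boundary_point_general a b hab w hwnn hcont C hC hnondeg β₀ hβ₀def haβ₀ hwb
end
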